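/- Let a, b be nonzero complex numbers with a = |a|e^{iφ₁}, b = |b|e^{iφ₂}, φ := φ₂ − φ₁, let k ≥ 1 be an integer, and let W : ℤ → M₂(ℂ) be a bounded function such that sup_{n∈ℤ} ‖n·(W(n) − W(n−k))‖ < ∞. Then there is a constant C ≥ 0 such that for every finitely supported u : ℤ → ℂ², ‖A_k(W·u) − W·(A_k u)‖_{ℓ²(ℤ;ℂ²)} ≤ C·‖u‖_{ℓ²(ℤ;ℂ²)}; in other words, the commutator i[A_k, W], defined on the dense subspace of finitely supported sequences, extends to a bounded operator on ℓ²(ℤ;ℂ²). -/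

import Mathlib

open Complex

/-- The conjugate operator `A_k`, acting pointwise on sequences `u : ℤ → ℂ²` by
`(A_k u)(n) = (i|a||b|/4)·[e^{ikφ}(2n−k)·u(n−k) − e^{−ikφ}(2n+k)·u(n+k)]`. -/
noncomputable def Akop (a b : ℂ) (φ : ℝ) (k : ℕ) (u : ℤ → Fin 2 → ℂ) :
    ℤ → Fin 2 → ℂ := fun n =>
  (Complex.I * (‖a‖ : ℂ) * (‖b‖ : ℂ) / 4) •
    ((Complex.exp ((k : ℂ) * (φ : ℂ) * Complex.I) * (2 * (n : ℂ) - (k : ℂ))) •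
        u (n - (k : ℤ)) -
      (Complex.exp (-((k : ℂ) * (φ : ℂ) * Complex.I)) * (2 * (n : ℂ) + (k : ℂ))) •
        u (n + (k : ℤ)))

/-- The `ℓ²(ℤ;ℂ²)`-norm of a sequence `v : ℤ → ℂ²`. -/
noncomputable def l2normZ (v : ℤ → Fin 2 → ℂ) : ℝ :=
  Real.sqrt (∑' n : ℤ, (‖v n 0‖ ^ 2 + ‖v n 1‖ ^ 2))

/-! The commutator only sees differences of `W`: `(A_k(Wu) − W A_k u)(n)` is a combination, with
unimodular phases, of `(2n − k)(W(n−k) − W(n))·u(n−k)` and the same matrix taken at `n + k`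
applied to `u(n+k)`. The hypothesis `|n|·|W(n) − W(n−k)| ≤ C₁` absorbs the linear weight
`2n − k`, so both coefficient matrices are uniformly bounded, and `u ↦ P·u(·−k) + Q·u(·+k)`
with bounded `P`, `Q` is bounded on `ℓ²` because shifts preserve the `ℓ²` norm. -/

open Matrix

lemma exists_abs_two_mul_sub_mul_le {ι : Type*} [Finite ι] {x : ℤ → ι → ℝ} {C : ℝ}
    (hx₀ : ∀ n i, 0 ≤ x n i) (hx : ∀ (n : ℤ) i, |(n : ℝ)| * x n i ≤ C) (k : ℝ) :
    ∃ K, ∀ (n : ℤ) i, |2 * (n : ℝ) - k| * x n i ≤ K := by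
  obtain ⟨M, hM⟩ := Finite.exists_le (x 0)
  refine ⟨max ((2 + |k|) * C) (|k| * M), fun n i => ?_⟩
  rcases eq_or_ne n 0 with rfl | hn
  -- `hx` says nothing at `n = 0`; there the weight is `|k|` and `x 0` is bounded since `ι` is finite.
  · refine le_max_of_le_right ?_
    simpa using mul_le_mul_of_nonneg_left (hM i) (abs_nonneg k)
  · have hn₁ : 1 ≤ |(n : ℝ)| := by exact_mod_cast Int.one_le_abs hn
    have hweight : |2 * (n : ℝ) - k| ≤ (2 + |k|) * |(n : ℝ)| :=
      calc |2 * (n : ℝ) - k| ≤ 2 * |(n : ℝ)| + |k| := by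
            simpa [abs_mul] using abs_sub (2 * (n : ℝ)) k
        _ ≤ (2 + |k|) * |(n : ℝ)| := by nlinarith [abs_nonneg k]
    refine le_max_of_le_left ?_
    calc |2 * (n : ℝ) - k| * x n i ≤ (2 + |k|) * |(n : ℝ)| * x n i :=
          mul_le_mul_of_nonneg_right hweight (hx₀ n i)
      _ = (2 + |k|) * (|(n : ℝ)| * x n i) := mul_assoc _ _ _
      _ ≤ (2 + |k|) * C := mul_le_mul_of_nonneg_left (hx n i) (by positivity)

section weightedDiff

variable {ι κ : Type*} (W : ℤ → Matrix ι κ ℂ) (k : ℕ)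

def weightedDiff (n : ℤ) : Matrix ι κ ℂ := (2 * (n : ℂ) - k) • (W (n - k) - W n)

lemma norm_weightedDiff_apply (n : ℤ) (i : ι) (j : κ) :
    ‖weightedDiff W k n i j‖ = |2 * (n : ℝ) - k| * ‖(W n - W (n - k)) i j‖ := by
  rw [weightedDiff, Matrix.smul_apply, norm_smul, Matrix.sub_apply, Matrix.sub_apply,
    norm_sub_rev (W (n - k) i j)]
  congr 1
  simpa using Complex.norm_real (2 * (n : ℝ) - k)

lemma exists_norm_weightedDiff_le [Finite ι] [Finite κ]
    (hW : ∃ C : ℝ, ∀ (n : ℤ) i j, |(n : ℝ)| * ‖(W n - W (n - k)) i j‖ ≤ C) :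
    ∃ K, ∀ n i j, ‖weightedDiff W k n i j‖ ≤ K := by
  obtain ⟨C, hC⟩ := hW
  obtain ⟨K, hK⟩ := exists_abs_two_mul_sub_mul_le
    (x := fun n (p : ι × κ) => ‖(W n - W (n - k)) p.1 p.2‖)
    (fun _ _ => norm_nonneg _) (fun n p => hC n p.1 p.2) k
  exact ⟨K, fun n i j => (norm_weightedDiff_apply W k n i j).trans_le (hK n (i, j))⟩

end weightedDiff

lemma Akop_mulVec_sub_mulVec_Akop (a b : ℂ) (φ : ℝ) (k : ℕ) (W : ℤ → Matrix (Fin 2) (Fin 2) ℂ)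
    (u : ℤ → Fin 2 → ℂ) (n : ℤ) :
    Akop a b φ k (fun m => W m *ᵥ u m) n - W n *ᵥ Akop a b φ k u n =
      ((I * ‖a‖ * ‖b‖ / 4 * exp (k * φ * I)) • weightedDiff W k n) *ᵥ u (n - k) +
        ((I * ‖a‖ * ‖b‖ / 4 * exp (-(k * φ * I))) • weightedDiff W k (n + k)) *ᵥ u (n + k) := by
  simp only [Akop, weightedDiff, smul_mulVec, sub_mulVec, mulVec_smul, mulVec_sub,
    add_sub_cancel_right]
  push_cast
  module

lemma norm_mulVec_apply_le {α ι κ : Type*} [SeminormedRing α] [Fintype κ] {P : Matrix ι κ α}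
    {K : ℝ} (hP : ∀ i j, ‖P i j‖ ≤ K) (x : κ → α) (i : ι) :
    ‖(P *ᵥ x) i‖ ≤ K * ∑ j, ‖x j‖ :=
  calc ‖(P *ᵥ x) i‖ ≤ ∑ j, ‖P i j * x j‖ := norm_sum_le _ _
    _ ≤ ∑ j, K * ‖x j‖ := Finset.sum_le_sum fun j _ =>
      (norm_mul_le _ _).trans (mul_le_mul_of_nonneg_right (hP i j) (norm_nonneg _))
    _ = K * ∑ j, ‖x j‖ := (Finset.mul_sum _ _ _).symm

lemma sq_norm_mulVec_add_mulVec_le {P Q : Matrix (Fin 2) (Fin 2) ℂ} {K : ℝ}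
    (hP : ∀ i j, ‖P i j‖ ≤ K) (hQ : ∀ i j, ‖Q i j‖ ≤ K) (x y : Fin 2 → ℂ) :
    ‖(P *ᵥ x + Q *ᵥ y) 0‖ ^ 2 + ‖(P *ᵥ x + Q *ᵥ y) 1‖ ^ 2 ≤
      8 * K ^ 2 * (‖x 0‖ ^ 2 + ‖x 1‖ ^ 2 + (‖y 0‖ ^ 2 + ‖y 1‖ ^ 2)) := by
  set S := ‖x 0‖ + ‖x 1‖ + (‖y 0‖ + ‖y 1‖)
  have hcomp (i : Fin 2) : ‖(P *ᵥ x + Q *ᵥ y) i‖ ^ 2 ≤ K ^ 2 * S ^ 2 := by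
    rw [← mul_pow]
    refine pow_le_pow_left₀ (norm_nonneg _) ?_ 2
    calc ‖(P *ᵥ x + Q *ᵥ y) i‖ ≤ ‖(P *ᵥ x) i‖ + ‖(Q *ᵥ y) i‖ := norm_add_le _ _
      _ ≤ K * ∑ j, ‖x j‖ + K * ∑ j, ‖y j‖ :=
        add_le_add (norm_mulVec_apply_le hP x i) (norm_mulVec_apply_le hQ y i)
      _ = K * S := by rw [Fin.sum_univ_two, Fin.sum_univ_two]; ring
  have hS : S ^ 2 ≤ 4 * (‖x 0‖ ^ 2 + ‖x 1‖ ^ 2 + (‖y 0‖ ^ 2 + ‖y 1‖ ^ 2)) := by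
    nlinarith [sq_nonneg (‖x 0‖ - ‖x 1‖), sq_nonneg (‖x 0‖ - ‖y 0‖), sq_nonneg (‖x 0‖ - ‖y 1‖),
      sq_nonneg (‖x 1‖ - ‖y 0‖), sq_nonneg (‖x 1‖ - ‖y 1‖), sq_nonneg (‖y 0‖ - ‖y 1‖)]
  nlinarith [hcomp 0, hcomp 1, mul_le_mul_of_nonneg_left hS (sq_nonneg K)]

lemma tsum_le_of_le_add_shifts {f F : ℤ → ℝ} (hF : ∀ n, 0 ≤ F n) (hf : Summable f) (s : ℤ)
    {c : ℝ} (h : ∀ n, F n ≤ c * (f (n - s) + f (n + s))) :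
    ∑' n, F n ≤ 2 * c * ∑' n, f n := by
  have hf_sub : Summable fun n => f (n - s) := (Equiv.subRight s).summable_iff.mpr hf
  have hf_add : Summable fun n => f (n + s) := (Equiv.addRight s).summable_iff.mpr hf
  have hG := (hf_sub.add hf_add).mul_left c
  calc ∑' n, F n ≤ ∑' n, c * (f (n - s) + f (n + s)) :=
        (hG.of_nonneg_of_le hF h).tsum_le_tsum h hG
    _ = c * (∑' n, f (n - s) + ∑' n, f (n + s)) := by rw [tsum_mul_left, hf_sub.tsum_add hf_add]
    _ = 2 * c * ∑' n, f n := by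
      rw [show ∑' n, f (n - s) = ∑' n, f n from (Equiv.subRight s).tsum_eq f,
        show ∑' n, f (n + s) = ∑' n, f n from (Equiv.addRight s).tsum_eq f]
      ring

lemma l2normZ_le_of_sq_le_add_shifts {u v : ℤ → Fin 2 → ℂ} (hu : (Function.support u).Finite)
    (s : ℤ) {c : ℝ} (h : ∀ n, ‖v n 0‖ ^ 2 + ‖v n 1‖ ^ 2 ≤
      c * (‖u (n - s) 0‖ ^ 2 + ‖u (n - s) 1‖ ^ 2 + (‖u (n + s) 0‖ ^ 2 + ‖u (n + s) 1‖ ^ 2))) :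
    l2normZ v ≤ √(2 * c) * l2normZ u := by
  have hf : Summable fun n => ‖u n 0‖ ^ 2 + ‖u n 1‖ ^ 2 := by
    refine summable_of_hasFiniteSupport (hu.subset (Function.support_subset_iff'.mpr ?_))
    intro n hn
    simp [Function.notMem_support.mp hn]
  rw [l2normZ, l2normZ, ← Real.sqrt_mul' _ (tsum_nonneg fun n => by positivity)]
  exact Real.sqrt_le_sqrt (tsum_le_of_le_add_shifts (fun n => by positivity) hf s h)

lemma l2normZ_mulVec_add_mulVec_shift_le {P Q : ℤ → Matrix (Fin 2) (Fin 2) ℂ} {K : ℝ}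
    (hP : ∀ n i j, ‖P n i j‖ ≤ K) (hQ : ∀ n i j, ‖Q n i j‖ ≤ K) (s : ℤ) {u : ℤ → Fin 2 → ℂ}
    (hu : (Function.support u).Finite) :
    l2normZ (fun n => P n *ᵥ u (n - s) + Q n *ᵥ u (n + s)) ≤ 4 * K * l2normZ u := by
  have hK : 0 ≤ K := (norm_nonneg _).trans (hP 0 0 0)
  have h := l2normZ_le_of_sq_le_add_shifts hu s fun n =>
    sq_norm_mulVec_add_mulVec_le (hP n) (hQ n) (u (n - s)) (u (n + s))
  rwa [show 2 * (8 * K ^ 2) = (4 * K) ^ 2 by ring, Real.sqrt_sq (by positivity)] at h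

theorem commutator_Ak_W_bounded_general (a b : ℂ)
    (φ : ℝ) (k : ℕ)
    (W : ℤ → Matrix (Fin 2) (Fin 2) ℂ)
    (hWq : ∃ C₁ : ℝ, ∀ (n : ℤ) (i j : Fin 2),
      |(n : ℝ)| * ‖(W n - W (n - (k : ℤ))) i j‖ ≤ C₁) :
    ∃ C : ℝ, 0 ≤ C ∧ ∀ u : ℤ → Fin 2 → ℂ, (Function.support u).Finite →
      l2normZ (fun n =>
          Akop a b φ k (fun m => (W m).mulVec (u m)) n -
            (W n).mulVec (Akop a b φ k u n))
        ≤ C * l2normZ u := by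
  obtain ⟨K, hK⟩ := exists_norm_weightedDiff_le W k hWq
  have hK₀ : 0 ≤ K := (norm_nonneg _).trans (hK 0 0 0)
  have hcoeff (z : ℂ) (hz : ‖z‖ = ‖a‖ * ‖b‖ / 4) (n : ℤ) (i j : Fin 2) :
      ‖(z • weightedDiff W k n) i j‖ ≤ ‖a‖ * ‖b‖ / 4 * K := by
    rw [Matrix.smul_apply, norm_smul, hz]
    exact mul_le_mul_of_nonneg_left (hK n i j) (by positivity)
  refine ⟨4 * (‖a‖ * ‖b‖ / 4 * K), by positivity, fun u hu => ?_⟩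
  simp only [Akop_mulVec_sub_mulVec_Akop]
  have hP := hcoeff (I * ‖a‖ * ‖b‖ / 4 * exp (k * φ * I)) (by simp [Complex.norm_exp])
  have hQ := hcoeff (I * ‖a‖ * ‖b‖ / 4 * exp (-(k * φ * I))) (by simp [Complex.norm_exp])
  exact l2normZ_mulVec_add_mulVec_shift_le hP (fun n => hQ (n + k)) k hu

/-- If `W : ℤ → M₂(ℂ)` is bounded and
`sup_n ‖n·(W(n) − W(n−k))‖ < ∞` (stated entrywise, which is equivalent for any matrix
norm), then the commutator `i[A_k, W]` is bounded on finitely supported sequences for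
the `ℓ²(ℤ;ℂ²)`-norm. -/
theorem commutator_Ak_W_bounded (a b : ℂ) (ha : a ≠ 0) (hb : b ≠ 0)
    (φ₁ φ₂ : ℝ) (hφ₁ : φ₁ ∈ Set.Ioc (-Real.pi) Real.pi)
    (hφ₂ : φ₂ ∈ Set.Ioc (-Real.pi) Real.pi)
    (ha' : a = (‖a‖ : ℂ) * Complex.exp ((φ₁ : ℂ) * Complex.I))
    (hb' : b = (‖b‖ : ℂ) * Complex.exp ((φ₂ : ℂ) * Complex.I))
    (φ : ℝ) (hφ : φ = φ₂ - φ₁) (k : ℕ) (hk : 1 ≤ k)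
    (W : ℤ → Matrix (Fin 2) (Fin 2) ℂ)
    (hWbdd : ∃ C₀ : ℝ, ∀ (n : ℤ) (i j : Fin 2), ‖W n i j‖ ≤ C₀)
    (hWq : ∃ C₁ : ℝ, ∀ (n : ℤ) (i j : Fin 2),
      |(n : ℝ)| * ‖(W n - W (n - (k : ℤ))) i j‖ ≤ C₁) :
    ∃ C : ℝ, 0 ≤ C ∧ ∀ u : ℤ → Fin 2 → ℂ, (Function.support u).Finite →
      l2normZ (fun n =>
          Akop a b φ k (fun m => (W m).mulVec (u m)) n -
            (W n).mulVec (Akop a b φ k u n))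
        ≤ C * l2normZ u :=
  commutator_Ak_W_bounded_general a b φ k W hWq
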